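/- The product of two normalized Hermite functions satisfies h_k(x)·h_l(x) = e^{-x²/2}·∑_{m=0}^{min(k,l)} β_{k,l,m}·h_{k+l−2m}(x), where β_{k,l,m} = π^{-1/4}·(k!·l!·(k+l−2m)!)^{1/2}/(m!·(k−m)!·(l−m)!). -/

import Mathlib

open Real MeasureTheory

/-- The physicists' Hermite polynomials: `H 0 = 1`, `H (k+1) = 2·X·H k − (H k)'`. -/
noncomputable def hermiteP : ℕ → Polynomial ℝ
  | 0 => 1
  | n + 1 => 2 * (Polynomial.X * hermiteP n) - Polynomial.derivative (hermiteP n)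

/-- The k-th physicists' Hermite polynomial as a function on ℝ. -/
noncomputable def H (k : ℕ) (x : ℝ) : ℝ := (hermiteP k).eval x

/-- The normalization constants `α k = (2^k · k! · √π)^{-1/2}`. -/
noncomputable def α (k : ℕ) : ℝ :=
  ((2 : ℝ) ^ k * (Nat.factorial k : ℝ) * Real.sqrt π) ^ (-(1 / 2 : ℝ))

/-- The normalized Hermite functions `h k x = α k · H k x · e^{-x²/2}`. -/
noncomputable def h (k : ℕ) (x : ℝ) : ℝ := α k * H k x * Real.exp (-x ^ 2 / 2)

/-- The coefficients `β_{k,l,m}` appearing in the product formula for Hermite functions. -/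
noncomputable def β (k l m : ℕ) : ℝ :=
  π ^ (-(1 / 4 : ℝ)) *
    Real.sqrt ((Nat.factorial k : ℝ) * (Nat.factorial l : ℝ) *
      (Nat.factorial (k + l - 2 * m) : ℝ)) /
    ((Nat.factorial m : ℝ) * (Nat.factorial (k - m) : ℝ) * (Nat.factorial (l - m) : ℝ))

/-!
The Hermite polynomials linearize as `H_k H_l = ∑_m 2^m m! C(k,m) C(l,m) H_{k+l-2m}`.
For `l ≤ k` this follows by two-step induction on `l`: the recurrence
`H_{l+2} = 2X H_{l+1} - 2(l+1) H_l` together with `2X H_n = H_{n+1} + 2n H_{n-1}` reduces the step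
to a three-term identity between these coefficients. The normalizations then match,
`α_k α_l 2^m m! C(k,m) C(l,m) = β_{k,l,m} α_{k+l-2m}`, an identity between positive reals
that is easiest to compare after squaring.
-/

open Polynomial

lemma hermiteP_succ (n : ℕ) :
    hermiteP (n + 1) = 2 * (X * hermiteP n) - derivative (hermiteP n) := rfl

lemma derivative_hermiteP_succ (n : ℕ) :
    derivative (hermiteP (n + 1)) = 2 * (n + 1 : ℝ[X]) * hermiteP n := by
  induction n with
  | zero => simp [hermiteP]
  | succ n ih =>
    have ih' := congrArg derivative ih
    simp only [derivative_mul, derivative_ofNat, derivative_add, derivative_natCast,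
      derivative_one, zero_mul, zero_add, add_zero] at ih'
    rw [hermiteP_succ (n + 1), derivative_sub, derivative_mul, derivative_mul, ih', ih,
      hermiteP_succ n]
    simp only [derivative_ofNat, derivative_X]
    push_cast
    ring

lemma hermiteP_succ_succ (n : ℕ) :
    hermiteP (n + 2) = 2 * X * hermiteP (n + 1) - 2 * (n + 1 : ℝ[X]) * hermiteP n := by
  rw [hermiteP_succ (n + 1), derivative_hermiteP_succ]; ring

lemma two_X_mul_hermiteP (n : ℕ) :
    2 * X * hermiteP n = hermiteP (n + 1) + 2 * (n : ℝ[X]) * hermiteP (n - 1) := by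
  cases n with
  | zero => simp [hermiteP]
  | succ n => rw [hermiteP_succ_succ, Nat.add_sub_cancel]; push_cast; ring

lemma two_X_mul_sum_hermiteP (f : ℕ → ℕ) {n N : ℕ} (hN : 2 * N ≤ n + 2) :
    2 * X * ∑ m ∈ Finset.range N, f m • hermiteP (n + 1 - 2 * m) =
      ∑ m ∈ Finset.range N, f m • hermiteP (n + 2 - 2 * m) +
        ∑ m ∈ Finset.range N, (2 * (n + 1 - 2 * m) * f m) • hermiteP (n - 2 * m) := by
  rw [Finset.mul_sum, ← Finset.sum_add_distrib]
  refine Finset.sum_congr rfl fun m hm => ?_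
  have hm : 2 * m ≤ n := by have := Finset.mem_range.mp hm; omega
  rw [mul_smul_comm, two_X_mul_hermiteP, show n + 1 - 2 * m + 1 = n + 2 - 2 * m by omega,
    show n + 1 - 2 * m - 1 = n - 2 * m by omega]
  simp only [nsmul_eq_mul]
  push_cast
  ring

def hermiteLinCoeff (k l m : ℕ) : ℕ := 2 ^ m * m.factorial * k.choose m * l.choose m

lemma hermiteLinCoeff_zero (k l : ℕ) : hermiteLinCoeff k l 0 = 1 := by
  simp [hermiteLinCoeff]

lemma hermiteLinCoeff_comm (k l m : ℕ) : hermiteLinCoeff k l m = hermiteLinCoeff l k m := by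
  simp only [hermiteLinCoeff]; ring

lemma hermiteLinCoeff_of_lt {k l m : ℕ} (h : l < m) : hermiteLinCoeff k l m = 0 := by
  simp [hermiteLinCoeff, Nat.choose_eq_zero_of_lt h]

lemma hermiteLinCoeff_mul_factorial {k l m : ℕ} (hk : m ≤ k) (hl : m ≤ l) :
    hermiteLinCoeff k l m * (m.factorial * (k - m).factorial * (l - m).factorial) =
      2 ^ m * (k.factorial * l.factorial) := by
  rw [hermiteLinCoeff, ← Nat.choose_mul_factorial_mul_factorial hk,
    ← Nat.choose_mul_factorial_mul_factorial hl]
  ring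

lemma hermiteLinCoeff_succ_succ {k j i : ℕ} (hk : j + 2 ≤ k) (hi : i ≤ j + 1) :
    hermiteLinCoeff k (j + 2) (i + 1) + 2 * (j + 1) * hermiteLinCoeff k j i =
      hermiteLinCoeff k (j + 1) (i + 1) +
        2 * (k + j + 1 - 2 * i) * hermiteLinCoeff k (j + 1) i := by
  have hk' : k.choose (i + 1) * (i + 1) = k.choose i * (k - i) := Nat.choose_succ_right_eq k i
  have hj : (j + 1) * j.choose i = (j + 1).choose (i + 1) * (i + 1) := Nat.add_one_mul_choose_eq j i
  have hj' : (j + 1).choose (i + 1) * (i + 1) = (j + 1).choose i * (j + 1 - i) :=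
    Nat.choose_succ_right_eq (j + 1) i
  simp only [hermiteLinCoeff, Nat.choose_succ_succ (j + 1) i, Nat.factorial_succ, pow_succ,
    show k + j + 1 - 2 * i = (k - i) + (j + 1 - i) by omega]
  zify [show i ≤ k by omega, hi] at hk' hj hj' ⊢
  linear_combination (2 * 2 ^ i * (i.factorial : ℤ)) *
    (((j + 1).choose i : ℤ) * hk' + (k.choose i : ℤ) * hj + (k.choose i : ℤ) * hj')

noncomputable def hermiteLinSum (k l : ℕ) : ℝ[X] :=
  ∑ m ∈ Finset.range (l + 1), hermiteLinCoeff k l m • hermiteP (k + l - 2 * m)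

lemma hermiteLinSum_succ_succ {k j : ℕ} (hk : j + 2 ≤ k) :
    hermiteLinSum k (j + 2) =
      2 * X * hermiteLinSum k (j + 1) - 2 * (j + 1 : ℝ[X]) * hermiteLinSum k j := by
  have h_top : hermiteLinSum k (j + 2) = hermiteP (k + j + 2) +
      ∑ i ∈ Finset.range (j + 2),
        hermiteLinCoeff k (j + 2) (i + 1) • hermiteP (k + j - 2 * i) := by
    rw [hermiteLinSum, Finset.sum_range_succ', add_comm]
    simp only [hermiteLinCoeff_zero, one_smul,
      show ∀ i, k + (j + 2) - 2 * (i + 1) = k + j - 2 * i by omega]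
    rfl
  have h_shift :
      ∑ m ∈ Finset.range (j + 2), hermiteLinCoeff k (j + 1) m • hermiteP (k + j + 2 - 2 * m) =
        hermiteP (k + j + 2) + ∑ i ∈ Finset.range (j + 2),
          hermiteLinCoeff k (j + 1) (i + 1) • hermiteP (k + j - 2 * i) := by
    conv_lhs => rw [Finset.sum_range_succ']
    conv_rhs =>
      rw [Finset.sum_range_succ, hermiteLinCoeff_of_lt (show j + 1 < j + 1 + 1 by omega)]
    simp only [hermiteLinCoeff_zero, one_smul, zero_smul, add_zero,
      show ∀ i, k + j + 2 - 2 * (i + 1) = k + j - 2 * i by omega]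
    rw [add_comm, mul_zero, Nat.sub_zero]
  have h_X : 2 * X * hermiteLinSum k (j + 1) = hermiteP (k + j + 2) +
      ∑ i ∈ Finset.range (j + 2), (hermiteLinCoeff k (j + 1) (i + 1) +
        2 * (k + j + 1 - 2 * i) * hermiteLinCoeff k (j + 1) i) • hermiteP (k + j - 2 * i) := by
    rw [hermiteLinSum, ← Nat.add_assoc,
      two_X_mul_sum_hermiteP _ (show 2 * (j + 1 + 1) ≤ k + j + 2 by omega), h_shift]
    simp only [add_smul, Finset.sum_add_distrib, add_assoc]
  have h_low : 2 * (j + 1 : ℝ[X]) * hermiteLinSum k j =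
      ∑ i ∈ Finset.range (j + 2),
        (2 * (j + 1) * hermiteLinCoeff k j i) • hermiteP (k + j - 2 * i) := by
    rw [hermiteLinSum, Finset.sum_range_succ _ (j + 1),
      hermiteLinCoeff_of_lt (show j < j + 1 by omega), Finset.mul_sum]
    simp only [mul_zero, zero_smul, add_zero]
    refine Finset.sum_congr rfl fun i _ => ?_
    simp only [nsmul_eq_mul]
    push_cast
    ring
  rw [eq_sub_iff_add_eq, h_top, h_low, h_X, add_assoc, ← Finset.sum_add_distrib]
  congr 1
  refine Finset.sum_congr rfl fun i hi => ?_
  rw [← add_smul, hermiteLinCoeff_succ_succ hk (by have := Finset.mem_range.mp hi; omega)]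

lemma hermiteP_mul_of_le {j k : ℕ} (hjk : j ≤ k) :
    hermiteP k * hermiteP j = hermiteLinSum k j := by
  induction j using Nat.twoStepInduction with
  | zero => simp [hermiteLinSum, hermiteLinCoeff_zero, hermiteP]
  | one =>
    rw [hermiteLinSum, Finset.sum_range_succ, Finset.sum_range_one,
      show k + 1 - 2 * 1 = k - 1 by omega, mul_comm, hermiteP_succ, hermiteP, derivative_one,
      sub_zero, mul_one, two_X_mul_hermiteP]
    simp [hermiteLinCoeff]
  | more j ih ih' =>
    rw [hermiteLinSum_succ_succ hjk, ← ih (by omega), ← ih' (by omega), hermiteP_succ_succ]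
    ring

lemma hermiteP_mul (k l : ℕ) :
    hermiteP k * hermiteP l =
      ∑ m ∈ Finset.range (min k l + 1), hermiteLinCoeff k l m • hermiteP (k + l - 2 * m) := by
  rcases le_total l k with hlk | hkl
  · rw [min_eq_right hlk, hermiteP_mul_of_le hlk, hermiteLinSum]
  · rw [min_eq_left hkl, mul_comm, hermiteP_mul_of_le hkl, hermiteLinSum, add_comm l k]
    simp only [hermiteLinCoeff_comm l k]

lemma α_pos (k : ℕ) : 0 < α k := by unfold α; positivity

lemma α_sq (k : ℕ) : α k ^ 2 = (2 ^ k * k.factorial * √π)⁻¹ := by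
  have hA : (0 : ℝ) < 2 ^ k * k.factorial * √π := by positivity
  rw [α, ← Real.rpow_natCast, ← Real.rpow_mul hA.le]
  norm_num [Real.rpow_neg_one]

lemma β_nonneg (k l m : ℕ) : 0 ≤ β k l m := by unfold β; positivity

lemma β_sq (k l m : ℕ) : β k l m ^ 2 = k.factorial * l.factorial * (k + l - 2 * m).factorial /
    (√π * (m.factorial * (k - m).factorial * (l - m).factorial) ^ 2) := by
  have hπ : (π ^ (-(1 / 4 : ℝ))) ^ 2 = (√π)⁻¹ := by
    rw [← Real.rpow_natCast, ← Real.rpow_mul pi_pos.le, Real.sqrt_eq_rpow,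
      ← Real.rpow_neg pi_pos.le]
    norm_num
  rw [β, div_pow, mul_pow, hπ, Real.sq_sqrt (by positivity)]
  field_simp

lemma α_mul_α_mul_hermiteLinCoeff {k l m : ℕ} (hk : m ≤ k) (hl : m ≤ l) :
    α k * α l * hermiteLinCoeff k l m = β k l m * α (k + l - 2 * m) := by
  rw [← sq_eq_sq₀ (by have := α_pos k; have := α_pos l; positivity)
      (mul_nonneg (β_nonneg k l m) (α_pos _).le),
    mul_pow, mul_pow, mul_pow, α_sq, α_sq, α_sq, β_sq]
  have hc : (hermiteLinCoeff k l m : ℝ) * (m.factorial * (k - m).factorial * (l - m).factorial) =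
      2 ^ m * (k.factorial * l.factorial) := by
    exact_mod_cast hermiteLinCoeff_mul_factorial hk hl
  have h2 : (2 : ℝ) ^ k * 2 ^ l = 2 ^ m * 2 ^ m * 2 ^ (k + l - 2 * m) := by
    rw [← pow_add, ← pow_add, ← pow_add]; congr 1; omega
  field_simp
  linear_combination
    ((hermiteLinCoeff k l m : ℝ) * (m.factorial * (k - m).factorial * (l - m).factorial) +
      2 ^ m * (k.factorial * l.factorial)) * 2 ^ (k + l - 2 * m) * hc -
    ((k.factorial : ℝ) * l.factorial) ^ 2 * h2

theorem stmt_4 (k l : ℕ) (x : ℝ) :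
    h k x * h l x =
      Real.exp (-x ^ 2 / 2) *
        ∑ m ∈ Finset.range (min k l + 1), β k l m * h (k + l - 2 * m) x := by
  have hH : H k x * H l x = ∑ m ∈ Finset.range (min k l + 1),
      (hermiteLinCoeff k l m : ℝ) * H (k + l - 2 * m) x := by
    simpa [H, eval_finsetSum] using congrArg (eval x) (hermiteP_mul k l)
  calc h k x * h l x = α k * α l * (H k x * H l x) * Real.exp (-x ^ 2 / 2) ^ 2 := by
        simp only [h]; ring
    _ = _ := by
      rw [hH, Finset.mul_sum, Finset.sum_mul, Finset.mul_sum]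
      refine Finset.sum_congr rfl fun m hm => ?_
      obtain ⟨hmk, hml⟩ := le_min_iff.mp (Nat.lt_succ_iff.mp (Finset.mem_range.mp hm))
      rw [← mul_assoc, α_mul_α_mul_hermiteLinCoeff hmk hml, h]
      ring
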